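/- Let G be a k-connected graph and e ∈ E(G) an edge whose endpoints are not both contained in any minimum vertex cut of G. Then G.e is k-connected. -/

import Mathlib

/-
Let `S'` be a cut of `G.e` with fewer than `k` vertices, and let `T ⊆ V(G)` be its preimage under
the quotient map `V(G) → V(G.e)` that sends `v` to the merged vertex `u`. Since the quotient map
sends edges to edges or collapses them, `T` is a cut of `G`. If the merged vertex is not in `S'`
then `|T| = |S'| < k`, impossible; otherwise `T = S' ∪ {v}` is a cut of size at most `k`, hence a
minimum cut containing both `u` and `v`.
-/

open SimpleGraph

/-- `S` is a vertex separator of `G`: deleting `S` leaves a disconnected graph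
(two vertices with no path between them). -/
def IsSeparator {V : Type*} (G : SimpleGraph V) (S : Set V) : Prop :=
  ¬ (G.induce (Sᶜ : Set V)).Preconnected

/-- `S` is a minimal vertex separator of `G`. -/
def MinimalSeparator {V : Type*} (G : SimpleGraph V) (S : Set V) : Prop :=
  IsSeparator G S ∧ ∀ S' ⊂ S, ¬ IsSeparator G S'

/-- `G` is `k`-connected: more than `k` vertices and every separator has size at least `k`. -/
def KConnected {V : Type*} [Fintype V] (k : ℕ) (G : SimpleGraph V) : Prop :=
  k < Fintype.card V ∧ ∀ S : Set V, IsSeparator G S → k ≤ S.ncard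

/-- Vertex connectivity: least size of a set whose removal disconnects the graph
or leaves at most one vertex. -/
noncomputable def vConn {V : Type*} [Fintype V] (G : SimpleGraph V) : ℕ :=
  sInf {n | ∃ S : Set V, S.ncard = n ∧ (IsSeparator G S ∨ (Sᶜ : Set V).ncard ≤ 1)}

/-- Contraction of the edge `{u,v}`: the vertex `v` is deleted and `u` plays the
role of the merged vertex `z`, adjacent to all former neighbors of `u` or `v`. -/
def contract {V : Type*} (G : SimpleGraph V) (u v : V) :
    SimpleGraph {x : V // x ≠ v} where
  Adj a b := a ≠ b ∧ (G.Adj a b ∨ (a.1 = u ∧ G.Adj v b) ∨ (b.1 = u ∧ G.Adj v a))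
  symm := by
    constructor
    rintro a b ⟨h1, h2 | ⟨h3, h4⟩ | ⟨h3, h4⟩⟩
    · exact ⟨h1.symm, Or.inl h2.symm⟩
    · exact ⟨h1.symm, Or.inr (Or.inr ⟨h3, h4⟩)⟩
    · exact ⟨h1.symm, Or.inr (Or.inl ⟨h3, h4⟩)⟩
  loopless := by constructor; rintro a ⟨h, -⟩; exact h rfl

/-- A tree decomposition of `G` with tree `T` and bags `l`. -/
structure TreeDecomp {V ι : Type*} (G : SimpleGraph V) (T : SimpleGraph ι)
    (l : ι → Set V) : Prop where
  conn : T.Connected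
  acyclic : T.IsAcyclic
  coversV : ∀ v : V, ∃ x : ι, v ∈ l x
  coversE : ∀ ⦃u v : V⦄, G.Adj u v → ∃ x : ι, u ∈ l x ∧ v ∈ l x
  subtree : ∀ v : V, (T.induce {x : ι | v ∈ l x}).Connected

/-- A clique tree of `G`: a tree decomposition whose bags are exactly the
maximal cliques of `G`. -/
def IsCliqueTree {V ι : Type*} (G : SimpleGraph V) (T : SimpleGraph ι)
    (l : ι → Set V) : Prop :=
  TreeDecomp G T l ∧ (∀ x : ι, Maximal G.IsClique (l x)) ∧
    ∀ C : Set V, Maximal G.IsClique C → ∃ x : ι, l x = C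

/-- `G` is chordal: every cycle of length at least 4 has a chord. -/
def IsChordal {V : Type*} (G : SimpleGraph V) : Prop :=
  ∀ (v : V) (w : G.Walk v v), w.IsCycle → 4 ≤ w.length →
    ∃ a b : V, G.Adj a b ∧ a ∈ w.support ∧ b ∈ w.support ∧ s(a, b) ∉ w.edges

/-- A split partition of `G`: `I` is a stable set, `K` a clique, partitioning the vertices. -/
def IsSplitPartition {V : Type*} (G : SimpleGraph V) (I K : Set V) : Prop :=
  I ∪ K = Set.univ ∧ Disjoint I K ∧ (∀ a ∈ I, ∀ b ∈ I, ¬ G.Adj a b) ∧ G.IsClique K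

theorem SimpleGraph.Preconnected.of_surjective_of_reachable {A B : Type*} {H : SimpleGraph A}
    {H' : SimpleGraph B} (hH : H.Preconnected) (f : A → B) (hf : Function.Surjective f)
    (hadj : ∀ ⦃a b⦄, H.Adj a b → H'.Reachable (f a) (f b)) : H'.Preconnected := by
  intro x y
  obtain ⟨a, rfl⟩ := hf x
  obtain ⟨b, rfl⟩ := hf y
  rw [reachable_iff_reflTransGen]
  exact ((reachable_iff_reflTransGen a b).mp (hH a b)).lift' f
    fun a b h => (reachable_iff_reflTransGen _ _).mp (hadj h)

theorem IsSeparator.preimage {A B : Type*} {G : SimpleGraph A} {H : SimpleGraph B} (f : A → B)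
    (hf : Function.Surjective f)
    (hadj : ∀ ⦃a b⦄, G.Adj a b → f a = f b ∨ H.Adj (f a) (f b)) {S : Set B} (hS : IsSeparator H S) : IsSeparator G (f ⁻¹' S) := by
  intro hG
  refine hS (hG.of_surjective_of_reachable (fun a => ⟨f a, a.2⟩) ?_ ?_)
  · rintro ⟨b, hb⟩
    obtain ⟨a, rfl⟩ := hf b
    exact ⟨⟨a, hb⟩, rfl⟩
  · intro a b hab
    rcases hadj hab with h | h
    · exact (Subtype.ext h : (⟨f a, a.2⟩ : ↥Sᶜ) = ⟨f b, b.2⟩) ▸ Reachable.refl _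
    · exact Adj.reachable h

section contract

variable {V : Type*} [DecidableEq V] {u v : V}

def contractMap (huv : u ≠ v) (x : V) : {x : V // x ≠ v} :=
  if h : x = v then ⟨u, huv⟩ else ⟨x, h⟩

theorem contractMap_self (huv : u ≠ v) : contractMap huv v = ⟨u, huv⟩ := dif_pos rfl

theorem contractMap_val (huv : u ≠ v) (x : {x : V // x ≠ v}) : contractMap huv x.1 = x :=
  dif_neg x.2

theorem contractMap_surjective (huv : u ≠ v) : Function.Surjective (contractMap huv) :=
  fun x => ⟨x.1, contractMap_val huv x⟩

theorem contractMap_adj {G : SimpleGraph V} (huv : u ≠ v) {a b : V} (hab : G.Adj a b) :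
    contractMap huv a = contractMap huv b ∨
      (contract G u v).Adj (contractMap huv a) (contractMap huv b) := by
  by_cases ha : a = v
  · subst ha
    have hb : b ≠ a := hab.ne.symm
    rw [contractMap_self, contractMap_val huv ⟨b, hb⟩]
    by_cases hbu : b = u
    · exact Or.inl (Subtype.ext hbu.symm)
    · exact Or.inr ⟨fun h => hbu (congrArg Subtype.val h).symm, Or.inr (Or.inl ⟨rfl, hab⟩)⟩
  by_cases hb : b = v
  · subst hb
    rw [contractMap_self, contractMap_val huv ⟨a, ha⟩]
    by_cases hau : a = u
    · exact Or.inl (Subtype.ext hau)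
    · exact Or.inr ⟨fun h => hau (congrArg Subtype.val h), Or.inr (Or.inr ⟨rfl, hab.symm⟩)⟩
  rw [contractMap_val huv ⟨a, ha⟩, contractMap_val huv ⟨b, hb⟩]
  exact Or.inr ⟨fun h => hab.ne (congrArg Subtype.val h), Or.inl hab⟩

theorem contractMap_preimage_subset (huv : u ≠ v) (S : Set {x : V // x ≠ v}) :
    contractMap huv ⁻¹' S ⊆ insert v (Subtype.val '' S) := by
  intro x hx
  by_cases h : x = v
  · exact Or.inl h
  · exact Or.inr ⟨⟨x, h⟩, contractMap_val huv ⟨x, h⟩ ▸ hx, rfl⟩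

theorem contractMap_preimage_subset_of_notMem (huv : u ≠ v) {S : Set {x : V // x ≠ v}}
    (hu : ⟨u, huv⟩ ∉ S) : contractMap huv ⁻¹' S ⊆ Subtype.val '' S := by
  intro x hx
  rcases contractMap_preimage_subset huv S hx with rfl | h
  · exact absurd (contractMap_self huv ▸ hx) hu
  · exact h

end contract

/-- If no minimum vertex cut (a separator of size `k`) of the
`k`-connected graph `G` contains both endpoints of `e`, then `G.e` is
`k`-connected. -/
theorem stmt_18 {V : Type*} [Fintype V] [DecidableEq V] (G : SimpleGraph V) (k : ℕ)
    (hcard : k + 2 ≤ Fintype.card V) (hconn : KConnected k G)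
    (u v : V) (he : G.Adj u v)
    (hno : ¬ ∃ S : Set V, IsSeparator G S ∧ S.ncard = k ∧ u ∈ S ∧ v ∈ S) :
    KConnected k (contract G u v) := by
  have huv : u ≠ v := he.ne
  refine ⟨?_, fun S hS => ?_⟩
  · have : Fintype.card {x : V // x ≠ v} = Fintype.card V - 1 := Set.card_ne_eq v
    omega
  by_contra! hlt
  set T := contractMap huv ⁻¹' S
  have hT : IsSeparator G T :=
    hS.preimage _ (contractMap_surjective huv) fun _ _ => contractMap_adj huv
  have hval : (Subtype.val '' S).ncard = S.ncard :=
    Set.ncard_image_of_injective _ Subtype.val_injective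
  by_cases hu : (⟨u, huv⟩ : {x : V // x ≠ v}) ∈ S
  · have hTle : T.ncard ≤ S.ncard + 1 := hval ▸
      (Set.ncard_le_ncard (contractMap_preimage_subset huv S)).trans (Set.ncard_insert_le _ _)
    have huT : u ∈ T := show contractMap huv u ∈ S from contractMap_val huv ⟨u, huv⟩ ▸ hu
    have hvT : v ∈ T := show contractMap huv v ∈ S from contractMap_self huv ▸ hu
    exact hno ⟨T, hT, le_antisymm (by omega) (hconn.2 T hT), huT, hvT⟩
  · have hTle : T.ncard ≤ S.ncard :=
      hval ▸ Set.ncard_le_ncard (contractMap_preimage_subset_of_notMem huv hu)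
    exact absurd (hconn.2 T hT) (by omega)
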